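/- Let C be a nonsingular real circulant matrix. Then every eigenvalue of the symmetric matrix Y_n C equals ±|λ_j| for some eigenvalue λ_j of C, and the multiset of singular values of Y_n C equals the multiset {|λ_j| : j = 1,…,n} of absolute values of eigenvalues of C. -/

import Mathlib

open Matrix Complex

/-- The exchange (anti-identity) matrix over `ℂ`. -/
def exchangeMatrixC (n : ℕ) : Matrix (Fin n) (Fin n) ℂ :=
  fun i j => if (i : ℕ) + (j : ℕ) + 1 = n then 1 else 0

/-- The unitary Fourier matrix `F = (ω^{jk}/√n)` with `ω = e^{-2πi/n}`. -/
noncomputable def fourierMatrix (n : ℕ) : Matrix (Fin n) (Fin n) ℂ :=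
  Matrix.of fun j k : Fin n =>
    Complex.exp (-(2 * (Real.pi : ℂ) * Complex.I * (j : ℕ) * (k : ℕ)) / n) /
      (Real.sqrt n : ℂ)

/-- The singular values of a complex square matrix `M`: the nonnegative square
roots of the eigenvalues of `Mᴴ * M`. -/
noncomputable def singularValuesC {n : ℕ} (M : Matrix (Fin n) (Fin n) ℂ) : Fin n → ℝ :=
  fun i => Real.sqrt ((Matrix.isHermitian_conjTranspose_mul_self M).eigenvalues i)

/-!
Since `Y` reverses rows and a circulant entry depends only on `i - j`, the product `M = Y C` of
the exchange matrix with a real circulant is Hermitian, and `Y` is unitary. Hence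
`M ^ 2 = Mᴴ M = Cᴴ C = F diag(|λ_j|²) Fᴴ`, using that the Fourier matrix `F` is unitary (the
orthogonality of the characters `m ↦ ζ ^ (j m)` for a primitive `n`-th root `ζ`). So `M ^ 2` and
`Mᴴ M` have characteristic polynomial `∏ (X - |λ_j|²)`: an eigenvalue `μ` of `M` satisfies
`μ² = |λ_j|²`, and the singular values of `M` are the square roots `|λ_j|` of its roots.
-/

lemma exchangeMatrixC_eq_permMatrix (n : ℕ) : exchangeMatrixC n = Fin.revPerm.permMatrix ℂ := by
  ext i j
  simp only [exchangeMatrixC, PEquiv.toMatrix_apply, Equiv.toPEquiv_apply, Option.mem_def,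
    Option.some.injEq, Fin.revPerm_apply, Fin.ext_iff, Fin.val_rev]
  congr 1
  apply propext
  omega

lemma exchangeMatrixC_mem_unitaryGroup (n : ℕ) : exchangeMatrixC n ∈ unitaryGroup (Fin n) ℂ := by
  rw [mem_unitaryGroup_iff', exchangeMatrixC_eq_permMatrix, star_eq_conjTranspose,
    conjTranspose_permMatrix, ← permMatrix_mul, mul_inv_cancel, permMatrix_one]

lemma exchangeMatrixC_mul_apply {n : ℕ} (M : Matrix (Fin n) (Fin n) ℂ) (i j : Fin n) :
    (exchangeMatrixC n * M) i j = M i.rev j := by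
  rw [exchangeMatrixC_eq_permMatrix, PEquiv.toMatrix_toPEquiv_mul]
  rfl

lemma conjTranspose_mul_self_exchangeMatrixC_mul {n : ℕ} (A : Matrix (Fin n) (Fin n) ℂ) :
    (exchangeMatrixC n * A)ᴴ * (exchangeMatrixC n * A) = Aᴴ * A := by
  rw [conjTranspose_mul, mul_assoc, ← mul_assoc (exchangeMatrixC n)ᴴ,
    ← star_eq_conjTranspose (exchangeMatrixC n),
    mem_unitaryGroup_iff'.1 (exchangeMatrixC_mem_unitaryGroup n), one_mul]

lemma Matrix.circulant_rev_apply_comm {α : Type*} {n : ℕ} (v : Fin n → α) (i j : Fin n) :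
    circulant v i.rev j = circulant v j.rev i := by
  simp only [circulant_apply, ← Fin.rev_add, add_comm]

lemma isHermitian_exchangeMatrixC_mul_circulant {n : ℕ} (v : Fin n → ℝ) :
    (exchangeMatrixC n * (circulant v).map ofReal).IsHermitian := by
  ext i j
  simp only [conjTranspose_apply, exchangeMatrixC_mul_apply, map_apply, star_def, conj_ofReal,
    circulant_rev_apply_comm v j]

lemma IsPrimitiveRoot.sum_fin_div_pow_pow {K : Type*} [Field K] {ζ : K} {n : ℕ}
    (hζ : IsPrimitiveRoot ζ n) (j k : Fin n) :
    ∑ m : Fin n, (ζ ^ (j : ℕ) / ζ ^ (k : ℕ)) ^ (m : ℕ) = if j = k then (n : K) else 0 := by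
  rw [Fin.sum_univ_eq_sum_range (fun m => (ζ ^ (j : ℕ) / ζ ^ (k : ℕ)) ^ m)]
  have hζk : ζ ^ (k : ℕ) ≠ 0 := pow_ne_zero _ (hζ.ne_zero (Fin.pos k).ne')
  split_ifs with hjk
  · simp [hjk, div_self hζk]
  · have hne : ζ ^ (j : ℕ) / ζ ^ (k : ℕ) ≠ 1 := fun h =>
      hjk (Fin.ext (hζ.pow_inj j.isLt k.isLt ((div_eq_one_iff_eq hζk).1 h)))
    rw [geom_sum_eq hne, div_pow, ← pow_mul, ← pow_mul, mul_comm (j : ℕ), mul_comm (k : ℕ),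
      pow_mul, pow_mul, hζ.pow_eq_one, one_pow, one_pow, div_one, sub_self, zero_div]

lemma fourierMatrix_apply {n : ℕ} (j k : Fin n) :
    fourierMatrix n j k =
      cexp (-(2 * Real.pi * I / n)) ^ ((j : ℕ) * (k : ℕ)) / (Real.sqrt n : ℂ) := by
  rw [fourierMatrix, of_apply, ← exp_nat_mul]
  congr 2
  push_cast
  ring

lemma fourierMatrix_mem_unitaryGroup (n : ℕ) : fourierMatrix n ∈ unitaryGroup (Fin n) ℂ := by
  rw [mem_unitaryGroup_iff]
  ext j k
  have hn : n ≠ 0 := (Fin.pos j).ne'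
  have hζ : IsPrimitiveRoot (cexp (-(2 * Real.pi * I / n))) n := by
    rw [exp_neg]
    exact (isPrimitiveRoot_exp n hn).inv
  have hsqrt : (Real.sqrt n : ℂ) * (Real.sqrt n : ℂ) = n := by
    rw [← ofReal_mul, Real.mul_self_sqrt n.cast_nonneg, ofReal_natCast]
  simp only [mul_apply, star_apply, fourierMatrix_apply]
  generalize cexp (-(2 * Real.pi * I / n)) = ζ at hζ ⊢
  have hconj : star ζ = ζ⁻¹ := (inv_eq_conj (hζ.norm'_eq_one hn)).symm
  have hterm : ∀ m : Fin n,
      ζ ^ ((j : ℕ) * m) / (Real.sqrt n : ℂ) * star (ζ ^ ((k : ℕ) * m) / (Real.sqrt n : ℂ)) =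
        (ζ ^ (j : ℕ) / ζ ^ (k : ℕ)) ^ (m : ℕ) / n := by
    intro m
    rw [star_div₀, star_pow, hconj, star_def, conj_ofReal, div_mul_div_comm, hsqrt, div_pow,
      pow_mul, pow_mul, inv_pow, div_eq_mul_inv ((ζ ^ (j : ℕ)) ^ (m : ℕ)), inv_pow]
  rw [Finset.sum_congr rfl fun m _ => hterm m, ← Finset.sum_div, hζ.sum_fin_div_pow_pow, one_apply]
  split_ifs <;> simp [hn]

section

variable {ι : Type*} [Fintype ι] [DecidableEq ι]

lemma Matrix.charpoly_unitary_conj {R : Type*} [CommRing R] [StarRing R] {U : Matrix ι ι R}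
    (hU : U ∈ unitaryGroup ι R) (A : Matrix ι ι R) : (U * A * Uᴴ).charpoly = A.charpoly := by
  rw [charpoly_mul_comm, ← mul_assoc, ← star_eq_conjTranspose, mem_unitaryGroup_iff'.1 hU, one_mul]

lemma Matrix.roots_charpoly_diagonal {K : Type*} [Field K] (d : ι → K) :
    (diagonal d).charpoly.roots = Multiset.map d Finset.univ.val := by
  simpa only [Multiset.map_map, Function.comp_def, charpoly_diagonal,
    Finset.prod_eq_multiset_prod] using
    Polynomial.roots_multiset_prod_X_sub_C (Finset.univ.val.map d)

lemma Matrix.conjTranspose_mul_self_unitary_conj_diagonal {𝕜 : Type*} [RCLike 𝕜]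
    {U : Matrix ι ι 𝕜} (hU : U ∈ unitaryGroup ι 𝕜) (d : ι → 𝕜) :
    (U * diagonal d * Uᴴ)ᴴ * (U * diagonal d * Uᴴ) =
      U * diagonal (fun i => (‖d i‖ : 𝕜) ^ 2) * Uᴴ := by
  calc (U * diagonal d * Uᴴ)ᴴ * (U * diagonal d * Uᴴ)
      = U * ((diagonal d)ᴴ * (Uᴴ * U) * diagonal d) * Uᴴ := by
        simp only [conjTranspose_mul, conjTranspose_conjTranspose, mul_assoc]
    _ = U * diagonal (fun i => (‖d i‖ : 𝕜) ^ 2) * Uᴴ := by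
        rw [← star_eq_conjTranspose U, mem_unitaryGroup_iff'.1 hU, mul_one,
          diagonal_conjTranspose, diagonal_mul_diagonal]
        simp only [Pi.star_apply, RCLike.star_def, RCLike.conj_mul]

lemma Matrix.IsHermitian.sq_mem_roots_charpoly_conjTranspose_mul_self {K : Type*} [Field K]
    [Star K] {M : Matrix ι ι K} (hM : M.IsHermitian) {μ : K} (hμ : μ ∈ spectrum K M) :
    μ ^ 2 ∈ (Mᴴ * M).charpoly.roots := by
  rw [Polynomial.mem_roots (Mᴴ * M).charpoly_monic.ne_zero, ← mem_spectrum_iff_isRoot_charpoly,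
    hM.eq, ← sq]
  exact spectrum.pow_image_subset M 2 ⟨μ, hμ, rfl⟩

end

lemma map_singularValuesC_eq_of_roots_charpoly {n : ℕ} (M : Matrix (Fin n) (Fin n) ℂ)
    {s : Fin n → ℝ} (hs : ∀ i, 0 ≤ s i)
    (hroots : (Mᴴ * M).charpoly.roots = Multiset.map (fun i => (s i : ℂ) ^ 2) Finset.univ.val) :
    Multiset.map (singularValuesC M) Finset.univ.val = Multiset.map s Finset.univ.val := by
  have hH := isHermitian_conjTranspose_mul_self M
  have hsq : Multiset.map hH.eigenvalues Finset.univ.val =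
      Multiset.map (fun i => s i ^ 2) Finset.univ.val := by
    apply Multiset.map_injective ofReal_injective
    simpa [Multiset.map_map, Function.comp_def] using
      hH.roots_charpoly_eq_eigenvalues.symm.trans hroots
  have hsqrt := congrArg (Multiset.map Real.sqrt) hsq
  simp only [Multiset.map_map, Function.comp_def, Real.sqrt_sq (hs _)] at hsqrt
  exact hsqrt

theorem stmt14_general (n : ℕ) (C : Matrix (Fin n) (Fin n) ℂ) (Λ : Fin n → ℂ)
    (hreal : ∃ v : Fin n → ℝ, C = (Matrix.circulant v).map (Complex.ofReal))
    (hdecomp : C = fourierMatrix n * Matrix.diagonal Λ * (fourierMatrix n)ᴴ) :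
    (∀ μ : ℂ, μ ∈ spectrum ℂ (exchangeMatrixC n * C) →
      ∃ j : Fin n, μ = (‖Λ j‖ : ℂ) ∨ μ = -(‖Λ j‖ : ℂ)) ∧
    Multiset.map (singularValuesC (exchangeMatrixC n * C)) Finset.univ.val =
      Multiset.map (fun j => ‖Λ j‖) Finset.univ.val := by
  obtain ⟨v, rfl⟩ := hreal
  have hF := fourierMatrix_mem_unitaryGroup n
  have hroots : ((exchangeMatrixC n * (circulant v).map ofReal)ᴴ *
      (exchangeMatrixC n * (circulant v).map ofReal)).charpoly.roots =
        Multiset.map (fun j => (‖Λ j‖ : ℂ) ^ 2) Finset.univ.val := by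
    rw [conjTranspose_mul_self_exchangeMatrixC_mul, hdecomp,
      conjTranspose_mul_self_unitary_conj_diagonal hF, charpoly_unitary_conj hF,
      roots_charpoly_diagonal]
    rfl -- `RCLike.ofReal` on `ℂ` unfolds to `Complex.ofReal`
  refine ⟨fun μ hμ => ?_, map_singularValuesC_eq_of_roots_charpoly _ (fun j => norm_nonneg _) hroots⟩
  obtain ⟨j, -, hj⟩ := Multiset.mem_map.1 <| hroots ▸
    (isHermitian_exchangeMatrixC_mul_circulant v).sq_mem_roots_charpoly_conjTranspose_mul_self hμ
  exact ⟨j, sq_eq_sq_iff_eq_or_eq_neg.1 hj.symm⟩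

/-- For a nonsingular real circulant `C` with eigenvalues `Λ j`, every
eigenvalue of the symmetric matrix `Y C` equals `±|λ_j|` for some `j`, and the
multiset of singular values of `Y C` is `{|λ_j|}`. -/
theorem stmt14 (n : ℕ) (C : Matrix (Fin n) (Fin n) ℂ) (Λ : Fin n → ℂ)
    (hreal : ∃ v : Fin n → ℝ, C = (Matrix.circulant v).map (Complex.ofReal))
    (hdecomp : C = fourierMatrix n * Matrix.diagonal Λ * (fourierMatrix n)ᴴ)
    (hns : ∀ j, Λ j ≠ 0) :
    (∀ μ : ℂ, μ ∈ spectrum ℂ (exchangeMatrixC n * C) →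
      ∃ j : Fin n, μ = (‖Λ j‖ : ℂ) ∨ μ = -(‖Λ j‖ : ℂ)) ∧
    Multiset.map (singularValuesC (exchangeMatrixC n * C)) Finset.univ.val =
      Multiset.map (fun j => ‖Λ j‖) Finset.univ.val :=
  stmt14_general n C Λ hreal hdecomp
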